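/- Fix T > 0, d ≥ 1, β = (β₁,…,β_d) ∈ ℝ^d with ‖β‖_∞ = max_i |β_i|, and a d×d substochastic matrix Q with zero diagonal and Qⁿ → 0, with regulator map ψ. Suppose K ∈ (0,∞) is such that ψ is K-Lipschitz with respect to the uniform metric: for all ξ, ζ ∈ ∏_{i=1}^d D[0,T], max_i sup_{t∈[0,T]} |ψ⁽ⁱ⁾(ξ)(t) − ψ⁽ⁱ⁾(ζ)(t)| ≤ K max_i sup_{t∈[0,T]} |ξ⁽ⁱ⁾(t) − ζ⁽ⁱ⁾(t)|. Let w⁽¹⁾,…,w⁽ᵈ⁾ : [0,T] → [0,T] be nondecreasing with w⁽ⁱ⁾(0)=0 and w⁽ⁱ⁾(T)=T, and set ‖w − e‖_∞ = max_i sup_{t∈[0,T]} |w⁽ⁱ⁾(t) − t|. Then for every ξ with each ξ⁽ⁱ⁾ ∈ D^{β_i}[0,T], writing ξ∘w for the d-tuple with coordinates ξ⁽ⁱ⁾∘w⁽ⁱ⁾, one has max_i sup_{t∈[0,T]} |ψ⁽ⁱ⁾(ξ∘w)(t) − ψ⁽ⁱ⁾(ξ)(t)| ≤ 3K‖β‖_∞‖w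 − e‖_∞. -/

import Mathlib

open Set Filter

noncomputable section

/-- `f` is càdlàg on `[0,T]`: right-continuous on `[0,T)` and with left limits on `(0,T]`. -/
def Cadlag (T : ℝ) (f : ℝ → ℝ) : Prop :=
  (∀ t ∈ Set.Ico (0:ℝ) T, Filter.Tendsto f (nhdsWithin t (Set.Ici t)) (nhds (f t))) ∧
  (∀ t ∈ Set.Ioc (0:ℝ) T, ∃ L : ℝ, Filter.Tendsto f (nhdsWithin t (Set.Iio t)) (nhds L))

/-- `lam` is a strictly increasing continuous bijection of `[0,T]` onto itself. -/
def IsTimeChange (T : ℝ) (lam : ℝ → ℝ) : Prop :=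
  StrictMonoOn lam (Set.Icc 0 T) ∧ ContinuousOn lam (Set.Icc 0 T) ∧
  Set.MapsTo lam (Set.Icc 0 T) (Set.Icc 0 T) ∧
  Set.SurjOn lam (Set.Icc 0 T) (Set.Icc 0 T) ∧ lam 0 = 0 ∧ lam T = T

/-- Uniform distance of two (bounded) functions over `[0,T]`. -/
def unifDist (T : ℝ) (f g : ℝ → ℝ) : ℝ :=
  sSup {r : ℝ | ∃ t ∈ Set.Icc (0:ℝ) T, r = |f t - g t|}

/-- The Skorokhod `J₁` distance on `[0,T]`. -/
def J1Dist (T : ℝ) (f g : ℝ → ℝ) : ℝ :=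
  sInf {r : ℝ | ∃ lam : ℝ → ℝ, IsTimeChange T lam ∧
    r = max (unifDist T (fun t => f (lam t)) g) (unifDist T lam id)}

/-- The product `J₁` distance on `d`-tuples of paths. -/
def prodJ1Dist (T : ℝ) {d : ℕ} (ξ ζ : Fin d → ℝ → ℝ) : ℝ :=
  ∑ i, J1Dist T (ξ i) (ζ i)

/-- A substochastic routing matrix with zero diagonal whose powers tend to zero. -/
def Substochastic {d : ℕ} (Q : Matrix (Fin d) (Fin d) ℝ) : Prop :=
  (∀ i j, 0 ≤ Q i j) ∧ (∀ i, Q i i = 0) ∧ (∀ i, ∑ j, Q i j ≤ 1) ∧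
  Filter.Tendsto (fun n : ℕ => Q ^ n) Filter.atTop (nhds 0)

/-- The reflection matrix `𝒬 = I - Qᵀ`. -/
def refMatrix {d : ℕ} (Q : Matrix (Fin d) (Fin d) ℝ) : Matrix (Fin d) (Fin d) ℝ :=
  1 - Q.transpose

/-- `ζ` belongs to the feasible regulator set `Ψ(ξ)`: each coordinate of `ζ` is a
nondecreasing càdlàg path, nonnegative at the origin, and `ξ + 𝒬 ζ ≥ 0` on `[0,T]`. -/
def Feasible (T : ℝ) {d : ℕ} (Q : Matrix (Fin d) (Fin d) ℝ)
    (ξ ζ : Fin d → ℝ → ℝ) : Prop :=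
  (∀ i, Cadlag T (ζ i) ∧ MonotoneOn (ζ i) (Set.Icc 0 T) ∧ 0 ≤ ζ i 0) ∧
  (∀ t ∈ Set.Icc (0:ℝ) T, ∀ i, 0 ≤ ξ i t + ∑ j, refMatrix Q i j * ζ j t)

/-- The regulator map `ψ`, defined coordinatewise and pointwise as the infimum of the
feasible regulator set. -/
def regulator (T : ℝ) {d : ℕ} (Q : Matrix (Fin d) (Fin d) ℝ)
    (ξ : Fin d → ℝ → ℝ) : Fin d → ℝ → ℝ :=
  fun i t => sInf {z : ℝ | ∃ ζ, Feasible T Q ξ ζ ∧ z = ζ i t}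

/-- The content map `φ(ξ) = ξ + 𝒬 ψ(ξ)`. -/
def content (T : ℝ) {d : ℕ} (Q : Matrix (Fin d) (Fin d) ℝ)
    (ξ : Fin d → ℝ → ℝ) : Fin d → ℝ → ℝ :=
  fun i t => ξ i t + ∑ j, refMatrix Q i j * regulator T Q ξ j t

/-- `D^β[0,T]`: càdlàg paths `f` with `f 0 ≥ 0` such that `t ↦ f t - β t` is nondecreasing. -/
def DBeta (T β : ℝ) (f : ℝ → ℝ) : Prop :=
  Cadlag T f ∧ 0 ≤ f 0 ∧ MonotoneOn (fun t => f t - β * t) (Set.Icc 0 T)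

/-- `max_i sup_{t ∈ [0,T]} |ξ⁽ⁱ⁾(t) - ζ⁽ⁱ⁾(t)|`, the uniform distance of tuples of paths. -/
def supDistTuple (T : ℝ) {d : ℕ} (ξ ζ : Fin d → ℝ → ℝ) : ℝ :=
  sSup {r : ℝ | ∃ i : Fin d, ∃ t ∈ Set.Icc (0:ℝ) T, r = |ξ i t - ζ i t|}

/-- `sup_{t ∈ [0,T]} |w(t) - t|`, the uniform deviation of a time deformation from identity. -/
def supTimeDev (T : ℝ) (w : ℝ → ℝ) : ℝ :=
  sSup {r : ℝ | ∃ t ∈ Set.Icc (0:ℝ) T, r = |w t - t|}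

/-! Write `b = ‖β‖_∞`, `δ = ‖w - e‖_∞` and `delay δ s = (s - δ)⁺`. Since `t ↦ ξ⁽ⁱ⁾(t) - βᵢ t` is
nondecreasing and `|wᵢ(t) - t| ≤ δ`, delaying time by `δ` gives the two pointwise comparisons
`ξ ∘ delay δ - 2bδ ≤ ξ ∘ w` and `ξ ∘ w ∘ delay δ - 2bδ ≤ ξ`. The regulator is antitone and
subadditive in its input, nondecreasing in time, and `ψ(χ ∘ delay a) ≤ ψ(χ) ∘ delay a`, so each
comparison `χ₂ ∘ delay a - c ≤ χ₁` yields `ψ(χ₁) ≤ ψ(χ₂) + ψ(-c)`. Finally `ψ(0) = 0`, so the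
Lipschitz bound gives `ψ(-c) ≤ K c`, and both differences are at most `2Kbδ`. All inputs involved
are bounded below, hence have feasible regulators: `Qⁿ → 0` yields `v ≥ 0` with `(I - Qᵀ) v ≥ 1`. -/

open Matrix Topology

theorem exists_nonneg_one_le_sub_mulVec {ι : Type*} [Fintype ι] [DecidableEq ι]
    {P : Matrix ι ι ℝ} (hP : ∀ i j, 0 ≤ P i j) (hlim : Tendsto (fun n : ℕ => P ^ n) atTop (𝓝 0)) :
    ∃ v : ι → ℝ, 0 ≤ v ∧ ∀ i, 1 ≤ v i - (P *ᵥ v) i := by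
  have hpow : ∀ n : ℕ, 0 ≤ P ^ n *ᵥ 1 := by
    intro n
    induction n with
    | zero => simp [zero_le_one]
    | succ n ih =>
      rw [pow_succ', ← mulVec_mulVec]
      exact fun i => Finset.sum_nonneg fun j _ => mul_nonneg (hP i j) (ih j)
  obtain ⟨m, hm⟩ : ∃ m, ∀ i, (P ^ m *ᵥ 1) i ≤ 1 / 2 := by
    have hlim' : Tendsto (fun n => P ^ n *ᵥ 1) atTop (𝓝 0) := by
      simpa [Function.comp_def] using ((continuous_id.matrix_mulVec continuous_const).tendsto
        (0 : Matrix ι ι ℝ)).comp hlim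
    exact (eventually_all.2 fun i => (tendsto_pi_nhds.1 hlim' i).eventually
      (ge_mem_nhds (by norm_num : (0 : ℝ) < 1 / 2))).exists
  -- a truncated Neumann series: `(I - P) ∑_{n<m} Pⁿ 1 = 1 - Pᵐ 1`
  set v : ι → ℝ := (2 : ℝ) • ∑ n ∈ Finset.range m, P ^ n *ᵥ 1
  have htel : v - P *ᵥ v = (2 : ℝ) • (1 - P ^ m *ᵥ 1) := by
    simp only [v, mulVec_smul, mulVec_sum, mulVec_mulVec, ← pow_succ', ← smul_sub,
      ← Finset.sum_sub_distrib, Finset.sum_range_sub' (fun n => P ^ n *ᵥ 1), pow_zero,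
      one_mulVec]
  refine ⟨v, smul_nonneg zero_le_two (Finset.sum_nonneg fun n _ => hpow n), fun i => ?_⟩
  have hi := congrFun htel i
  simp only [Pi.sub_apply, Pi.smul_apply, Pi.one_apply, smul_eq_mul] at hi
  linarith [hm i]

section Regulator

variable {T : ℝ} {d : ℕ} {Q : Matrix (Fin d) (Fin d) ℝ}

theorem cadlag_const (c : ℝ) : Cadlag T fun _ => c :=
  ⟨fun _ _ => tendsto_const_nhds, fun _ _ => ⟨c, tendsto_const_nhds⟩⟩

theorem Cadlag.add {f g : ℝ → ℝ} (hf : Cadlag T f) (hg : Cadlag T g) :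
    Cadlag T (f + g) := by
  refine ⟨fun t ht => (hf.1 t ht).add (hg.1 t ht), fun t ht => ?_⟩
  obtain ⟨L₁, h₁⟩ := hf.2 t ht
  obtain ⟨L₂, h₂⟩ := hg.2 t ht
  exact ⟨L₁ + L₂, h₁.add h₂⟩

def delay (a s : ℝ) : ℝ := max (s - a) 0

theorem delay_mem_Icc {a s : ℝ} (ha : 0 ≤ a) (hs : s ∈ Icc 0 T) : delay a s ∈ Icc 0 T :=
  ⟨le_max_right _ _, max_le (by linarith [hs.2]) (hs.1.trans hs.2)⟩

theorem delay_le {a s : ℝ} (ha : 0 ≤ a) (hs : 0 ≤ s) : delay a s ≤ s :=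
  max_le (by linarith) hs

theorem monotone_delay (a : ℝ) : Monotone (delay a) :=
  fun _ _ h => max_le_max (by linarith) le_rfl

theorem Cadlag.comp_delay {f : ℝ → ℝ} {a : ℝ} (ha : 0 ≤ a) (hf : Cadlag T f) :
    Cadlag T fun s => f (delay a s) := by
  have hcont : Continuous (delay a) := (continuous_sub_right a).max continuous_const
  refine ⟨fun t ht => ?_, fun t ht => ?_⟩
  · have hu : delay a t ∈ Ico 0 T := ⟨le_max_right _ _, (delay_le ha ht.1).trans_lt ht.2⟩
    exact (hf.1 _ hu).comp (hcont.continuousWithinAt.tendsto_nhdsWithin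
      fun s hs => monotone_delay a (mem_Ici.1 hs))
  · rcases le_or_gt t a with hta | hta
    · refine ⟨f 0, tendsto_const_nhds.congr' (eventually_nhdsWithin_of_forall fun s hs => ?_)⟩
      show f 0 = f (max (s - a) 0)
      rw [max_eq_right (by linarith [mem_Iio.1 hs])]
    · obtain ⟨L, hL⟩ := hf.2 (t - a) ⟨by linarith, by linarith [ht.2]⟩
      have hshift : Tendsto (fun s => s - a) (𝓝[<] t) (𝓝[<] (t - a)) :=
        (continuous_sub_right a).continuousWithinAt.tendsto_nhdsWithin
          fun s hs => sub_lt_sub_right (mem_Iio.1 hs) a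
      refine ⟨L, (hL.comp hshift).congr' ?_⟩
      filter_upwards [eventually_nhdsWithin_of_eventually_nhds (eventually_gt_nhds hta)]
        with s hs
      show f (s - a) = f (max (s - a) 0)
      rw [max_eq_left (by linarith)]

theorem Feasible.nonneg {χ ζ : Fin d → ℝ → ℝ} (hζ : Feasible T Q χ ζ) {i : Fin d} {t : ℝ}
    (ht : t ∈ Icc 0 T) : 0 ≤ ζ i t :=
  (hζ.1 i).2.2.trans ((hζ.1 i).2.1 ⟨le_rfl, ht.1.trans ht.2⟩ ht ht.1)

theorem Feasible.mono {χ₁ χ₂ ζ : Fin d → ℝ → ℝ} (hζ : Feasible T Q χ₁ ζ)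
    (h : ∀ s ∈ Icc 0 T, ∀ j, χ₁ j s ≤ χ₂ j s) : Feasible T Q χ₂ ζ :=
  ⟨hζ.1, fun s hs j => (hζ.2 s hs j).trans (by linarith [h s hs j])⟩

theorem Feasible.add {χ₁ χ₂ ζ₁ ζ₂ : Fin d → ℝ → ℝ} (hζ₁ : Feasible T Q χ₁ ζ₁)
    (hζ₂ : Feasible T Q χ₂ ζ₂) : Feasible T Q (χ₁ + χ₂) (ζ₁ + ζ₂) := by
  refine ⟨fun j => ⟨(hζ₁.1 j).1.add (hζ₂.1 j).1, (hζ₁.1 j).2.1.add (hζ₂.1 j).2.1,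
    add_nonneg (hζ₁.1 j).2.2 (hζ₂.1 j).2.2⟩, fun s hs j => ?_⟩
  simp only [Pi.add_apply, mul_add, Finset.sum_add_distrib]
  linarith [hζ₁.2 s hs j, hζ₂.2 s hs j]

theorem Feasible.comp_delay {χ ζ : Fin d → ℝ → ℝ} (hζ : Feasible T Q χ ζ) {a : ℝ}
    (ha : 0 ≤ a) :
    Feasible T Q (fun j s => χ j (delay a s)) (fun j s => ζ j (delay a s)) := by
  refine ⟨fun j => ⟨(hζ.1 j).1.comp_delay ha, fun s hs r hr hsr => ?_, ?_⟩,
    fun s hs j => hζ.2 _ (delay_mem_Icc ha hs) j⟩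
  · exact (hζ.1 j).2.1 (delay_mem_Icc ha hs) (delay_mem_Icc ha hr) (monotone_delay a hsr)
  · simpa [delay, max_eq_right (neg_nonpos.2 ha)] using (hζ.1 j).2.2

theorem feasible_nonempty_of_le (hQ : Substochastic Q) {χ : Fin d → ℝ → ℝ} {M : ℝ}
    (hχ : ∀ i, ∀ t ∈ Icc 0 T, M ≤ χ i t) : ∃ ζ, Feasible T Q χ ζ := by
  have hlim : Tendsto (fun n : ℕ => Qᵀ ^ n) atTop (𝓝 0) := by
    simpa [Function.comp_def, transpose_pow] using
      (continuous_id.matrix_transpose.tendsto 0).comp hQ.2.2.2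
  obtain ⟨v, hv0, hv⟩ := exists_nonneg_one_le_sub_mulVec (P := Qᵀ) (fun i j => hQ.1 j i) hlim
  set C := max (-M) 0
  refine ⟨fun j _ => C * v j,
    fun j => ⟨cadlag_const _, monotoneOn_const, mul_nonneg (le_max_right _ _) (hv0 j)⟩,
    fun t ht i => ?_⟩
  have hpair : ∑ j, refMatrix Q i j * (C * v j) = C * (v i - (Qᵀ *ᵥ v) i) := by
    have hR : refMatrix Q *ᵥ v = v - Qᵀ *ᵥ v := by rw [refMatrix, sub_mulVec, one_mulVec]
    rw [← Pi.sub_apply, ← hR, mulVec, dotProduct, Finset.mul_sum]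
    exact Finset.sum_congr rfl fun j _ => mul_left_comm _ _ _
  rw [hpair]
  nlinarith [hχ i t ht, hv i, le_max_left (-M) 0, le_max_right (-M) 0]

theorem regulator_le {χ ζ : Fin d → ℝ → ℝ} (hζ : Feasible T Q χ ζ) {i : Fin d} {t : ℝ}
    (ht : t ∈ Icc 0 T) : regulator T Q χ i t ≤ ζ i t :=
  csInf_le ⟨0, by rintro _ ⟨ζ', hζ', rfl⟩; exact hζ'.nonneg ht⟩ ⟨ζ, hζ, rfl⟩

theorem le_regulator {χ : Fin d → ℝ → ℝ} (hne : ∃ ζ, Feasible T Q χ ζ) {i : Fin d} {t r : ℝ}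
    (h : ∀ ζ, Feasible T Q χ ζ → r ≤ ζ i t) : r ≤ regulator T Q χ i t :=
  le_csInf (hne.elim fun ζ hζ => ⟨_, ζ, hζ, rfl⟩) (by rintro _ ⟨ζ, hζ, rfl⟩; exact h ζ hζ)

theorem regulator_nonneg {χ : Fin d → ℝ → ℝ} {i : Fin d} {t : ℝ} (ht : t ∈ Icc 0 T) :
    0 ≤ regulator T Q χ i t :=
  Real.sInf_nonneg (by rintro _ ⟨ζ, hζ, rfl⟩; exact hζ.nonneg ht)

theorem regulator_zero {i : Fin d} {t : ℝ} (ht : t ∈ Icc 0 T) :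
    regulator T Q (fun _ _ => 0) i t = 0 :=
  le_antisymm
    (regulator_le (ζ := fun _ _ => 0)
      ⟨fun _ => ⟨cadlag_const 0, monotoneOn_const, le_rfl⟩, fun _ _ _ => by simp⟩ ht)
    (regulator_nonneg ht)

theorem regulator_antitone {χ₁ χ₂ : Fin d → ℝ → ℝ} (hne : ∃ ζ, Feasible T Q χ₁ ζ)
    (h : ∀ s ∈ Icc 0 T, ∀ j, χ₁ j s ≤ χ₂ j s) {i : Fin d} {t : ℝ} (ht : t ∈ Icc 0 T) :
    regulator T Q χ₂ i t ≤ regulator T Q χ₁ i t :=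
  le_regulator hne fun _ hζ => regulator_le (hζ.mono h) ht

theorem regulator_monotoneOn {χ : Fin d → ℝ → ℝ} (hne : ∃ ζ, Feasible T Q χ ζ) (i : Fin d) :
    MonotoneOn (regulator T Q χ i) (Icc 0 T) :=
  fun _ hs _ ht hst => le_regulator hne fun _ hζ => (regulator_le hζ hs).trans
    ((hζ.1 i).2.1 hs ht hst)

theorem regulator_add_le {χ₁ χ₂ : Fin d → ℝ → ℝ} (hne₁ : ∃ ζ, Feasible T Q χ₁ ζ)
    (hne₂ : ∃ ζ, Feasible T Q χ₂ ζ) {i : Fin d} {t : ℝ} (ht : t ∈ Icc 0 T) :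
    regulator T Q (χ₁ + χ₂) i t ≤ regulator T Q χ₁ i t + regulator T Q χ₂ i t := by
  rw [← sub_le_iff_le_add']
  refine le_regulator hne₂ fun ζ₂ hζ₂ => ?_
  rw [sub_le_comm]
  refine le_regulator hne₁ fun ζ₁ hζ₁ => ?_
  rw [sub_le_iff_le_add]
  exact regulator_le (hζ₁.add hζ₂) ht

theorem regulator_comp_delay_le {χ : Fin d → ℝ → ℝ} (hne : ∃ ζ, Feasible T Q χ ζ) {a : ℝ}
    (ha : 0 ≤ a) {i : Fin d} {t : ℝ} (ht : t ∈ Icc 0 T) :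
    regulator T Q (fun j s => χ j (delay a s)) i t ≤ regulator T Q χ i (delay a t) :=
  le_regulator hne fun _ hζ => regulator_le (hζ.comp_delay ha) ht

theorem regulator_le_add_regulator_of_delay_sub_le (hQ : Substochastic Q)
    {χ₁ χ₂ : Fin d → ℝ → ℝ} (hne : ∃ ζ, Feasible T Q χ₂ ζ) {a c : ℝ} (ha : 0 ≤ a)
    (h : ∀ s ∈ Icc 0 T, ∀ j, χ₂ j (delay a s) - c ≤ χ₁ j s) {i : Fin d} {t : ℝ}
    (ht : t ∈ Icc 0 T) :
    regulator T Q χ₁ i t ≤ regulator T Q χ₂ i t + regulator T Q (fun _ _ => -c) i t := by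
  have hne_delay : ∃ ζ, Feasible T Q (fun j s => χ₂ j (delay a s)) ζ :=
    hne.elim fun _ hζ => ⟨_, hζ.comp_delay ha⟩
  have hne_c : ∃ ζ, Feasible T Q (fun _ _ => -c) ζ :=
    feasible_nonempty_of_le hQ fun _ _ _ => le_rfl
  calc regulator T Q χ₁ i t
      ≤ regulator T Q ((fun j s => χ₂ j (delay a s)) + fun _ _ => -c) i t :=
        regulator_antitone (hne_delay.elim fun _ h₁ => hne_c.elim fun _ h₂ => ⟨_, h₁.add h₂⟩)
          (fun s hs j => by simpa [← sub_eq_add_neg] using h s hs j) ht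
    _ ≤ regulator T Q (fun j s => χ₂ j (delay a s)) i t + regulator T Q (fun _ _ => -c) i t :=
        regulator_add_le hne_delay hne_c ht
    _ ≤ regulator T Q χ₂ i t + regulator T Q (fun _ _ => -c) i t := by
        gcongr
        exact (regulator_comp_delay_le hne ha ht).trans (regulator_monotoneOn hne i
          (delay_mem_Icc ha ht) ht (delay_le ha ht.1))

theorem abs_sub_le_supDistTuple {f g : Fin d → ℝ → ℝ} {B : ℝ}
    (hB : ∀ j, ∀ s ∈ Icc 0 T, |f j s - g j s| ≤ B) {i : Fin d} {t : ℝ} (ht : t ∈ Icc 0 T) :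
    |f i t - g i t| ≤ supDistTuple T f g :=
  le_csSup ⟨B, by rintro _ ⟨j, s, hs, rfl⟩; exact hB j s hs⟩ ⟨i, t, ht, rfl⟩

theorem supDistTuple_le {f g : Fin d → ℝ → ℝ} {B : ℝ} (hB₀ : 0 ≤ B)
    (hB : ∀ i, ∀ t ∈ Icc 0 T, |f i t - g i t| ≤ B) : supDistTuple T f g ≤ B :=
  Real.sSup_le (by rintro _ ⟨i, t, ht, rfl⟩; exact hB i t ht) hB₀

theorem supDistTuple_const (i : Fin d) {t : ℝ} (ht : t ∈ Icc 0 T) (a b : ℝ) :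
    supDistTuple T (fun (_ : Fin d) (_ : ℝ) => a) (fun _ _ => b) = |a - b| :=
  le_antisymm (supDistTuple_le (abs_nonneg _) fun _ _ _ => le_rfl)
    (abs_sub_le_supDistTuple (fun _ _ _ => le_rfl) (i := i) ht)

theorem exists_regulator_le {χ : Fin d → ℝ → ℝ} (hne : ∃ ζ, Feasible T Q χ ζ) :
    ∃ B, ∀ j, ∀ s ∈ Icc 0 T, regulator T Q χ j s ≤ B := by
  obtain ⟨ζ, hζ⟩ := hne
  refine ⟨∑ k, ζ k T, fun j s hs => ?_⟩
  have hT : T ∈ Icc 0 T := ⟨hs.1.trans hs.2, le_rfl⟩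
  calc regulator T Q χ j s ≤ ζ j s := regulator_le hζ hs
    _ ≤ ζ j T := (hζ.1 j).2.1 hs hT hs.2
    _ ≤ ∑ k, ζ k T :=
      Finset.single_le_sum (f := fun k => ζ k T) (fun _ _ => hζ.nonneg hT) (Finset.mem_univ j)

theorem regulator_neg_const_le (hQ : Substochastic Q) {K c : ℝ} (hc : 0 ≤ c)
    (hLip : supDistTuple T (regulator T Q fun _ _ => -c) (regulator T Q fun _ _ => 0) ≤
      K * supDistTuple T (fun (_ : Fin d) (_ : ℝ) => -c) fun _ _ => 0)
    {i : Fin d} {t : ℝ} (ht : t ∈ Icc 0 T) :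
    regulator T Q (fun _ _ => -c) i t ≤ K * c := by
  obtain ⟨B, hB⟩ := exists_regulator_le (feasible_nonempty_of_le hQ (χ := fun _ _ => -c)
    fun _ _ _ => le_rfl)
  have habs : ∀ j, ∀ s ∈ Icc 0 T, |regulator T Q (fun _ _ => -c) j s -
      regulator T Q (fun _ _ => 0) j s| = regulator T Q (fun _ _ => -c) j s := fun j s hs => by
    rw [regulator_zero hs, sub_zero, abs_of_nonneg (regulator_nonneg hs)]
  calc regulator T Q (fun _ _ => -c) i t
      = |regulator T Q (fun _ _ => -c) i t - regulator T Q (fun _ _ => 0) i t| :=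
        (habs i t ht).symm
    _ ≤ supDistTuple T (regulator T Q fun _ _ => -c) (regulator T Q fun _ _ => 0) :=
        abs_sub_le_supDistTuple (fun j s hs => (habs j s hs).trans_le (hB j s hs)) ht
    _ ≤ K * c := by rwa [supDistTuple_const i ht, sub_zero, abs_neg, abs_of_nonneg hc] at hLip

end Regulator

section TimeDeformation

variable {T : ℝ}

theorem supTimeDev_nonneg (w : ℝ → ℝ) : 0 ≤ supTimeDev T w :=
  Real.sSup_nonneg (by rintro _ ⟨t, -, rfl⟩; exact abs_nonneg _)

theorem abs_sub_le_supTimeDev {w : ℝ → ℝ} (hw : MapsTo w (Icc 0 T) (Icc 0 T)) {t : ℝ}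
    (ht : t ∈ Icc 0 T) : |w t - t| ≤ supTimeDev T w :=
  le_csSup ⟨T, by
    rintro _ ⟨s, hs, rfl⟩
    exact abs_le.2 ⟨by linarith [(hw hs).1, hs.2], by linarith [(hw hs).2, hs.1]⟩⟩ ⟨t, ht, rfl⟩

variable {β b δ : ℝ} {f w : ℝ → ℝ}

theorem DBeta.sub_le (hf : DBeta T β f) (hb : |β| ≤ b) {u v h : ℝ} (hu : u ∈ Icc 0 T)
    (hv : v ∈ Icc 0 T) (huv : u ≤ v) (hvu : v ≤ u + h) : f u - b * h ≤ f v := by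
  have hmono : f u - β * u ≤ f v - β * v := hf.2.2 hu hv huv
  have hβ : -b ≤ β := (neg_le_neg hb).trans (neg_abs_le β)
  nlinarith [(abs_nonneg β).trans hb]

theorem DBeta.neg_mul_le (hf : DBeta T β f) (hb : |β| ≤ b) {s : ℝ} (hs : s ∈ Icc 0 T) :
    -(b * T) ≤ f s := by
  have := hf.sub_le hb ⟨le_rfl, hs.1.trans hs.2⟩ hs hs.1 (by linarith [hs.2] : s ≤ 0 + T)
  linarith [hf.2.1]

theorem DBeta.delay_sub_le_comp (hf : DBeta T β f) (hb : |β| ≤ b)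
    (hw : MapsTo w (Icc 0 T) (Icc 0 T)) (hδ : ∀ t ∈ Icc 0 T, |w t - t| ≤ δ) {s : ℝ}
    (hs : s ∈ Icc 0 T) : f (delay δ s) - b * (2 * δ) ≤ f (w s) := by
  have hws := abs_le.1 (hδ s hs)
  have hδ0 : 0 ≤ δ := (abs_nonneg _).trans (hδ s hs)
  exact hf.sub_le hb (delay_mem_Icc hδ0 hs) (hw hs) (max_le (by linarith) (hw hs).1)
    (by linarith [show s - δ ≤ delay δ s from le_max_left _ _])

theorem DBeta.comp_delay_sub_le (hf : DBeta T β f) (hb : |β| ≤ b)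
    (hw : MapsTo w (Icc 0 T) (Icc 0 T)) (hw0 : w 0 = 0) (hδ : ∀ t ∈ Icc 0 T, |w t - t| ≤ δ)
    {s : ℝ} (hs : s ∈ Icc 0 T) : f (w (delay δ s)) - b * (2 * δ) ≤ f s := by
  have hδ0 : 0 ≤ δ := (abs_nonneg _).trans (hδ s hs)
  have hu := delay_mem_Icc hδ0 hs
  have hwu := abs_le.1 (hδ _ hu)
  have hsu : s - δ ≤ delay δ s := le_max_left _ _
  refine hf.sub_le hb (hw hu) hs ?_ (by linarith)
  rcases le_or_gt s δ with hsδ | hsδ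
  · rw [delay, max_eq_right (by linarith), hw0]
    exact hs.1
  · rw [delay, max_eq_left (by linarith)] at hwu ⊢
    linarith

end TimeDeformation

theorem regulator_composition_bound_general
    (T : ℝ) (d : ℕ) (hd : 0 < d) (β : Fin d → ℝ)
    (Q : Matrix (Fin d) (Fin d) ℝ) (hQ : Substochastic Q)
    (K : ℝ) (hK : 0 < K)
    (hLip : ∀ ξ ζ : Fin d → ℝ → ℝ, (∀ i, Cadlag T (ξ i)) → (∀ i, Cadlag T (ζ i)) →
      supDistTuple T (regulator T Q ξ) (regulator T Q ζ) ≤ K * supDistTuple T ξ ζ)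
    (w : Fin d → ℝ → ℝ)
    (hwmap : ∀ i, Set.MapsTo (w i) (Set.Icc 0 T) (Set.Icc 0 T))
    (hw0 : ∀ i, w i 0 = 0)
    (ξ : Fin d → ℝ → ℝ) (hξ : ∀ i, DBeta T (β i) (ξ i)) :
    supDistTuple T (regulator T Q (fun i t => ξ i (w i t))) (regulator T Q ξ) ≤
      3 * K * (Finset.univ.sup' (⟨⟨0, hd⟩, Finset.mem_univ _⟩ :
          (Finset.univ : Finset (Fin d)).Nonempty) fun i => |β i|) *
        (Finset.univ.sup' (⟨⟨0, hd⟩, Finset.mem_univ _⟩ :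
          (Finset.univ : Finset (Fin d)).Nonempty) fun i => supTimeDev T (w i)) := by
  set b := Finset.univ.sup' _ fun i => |β i|
  set δ := Finset.univ.sup' _ fun i => supTimeDev T (w i)
  have hb : ∀ i, |β i| ≤ b := fun i => Finset.le_sup' (fun i => |β i|) (Finset.mem_univ i)
  have hb0 : 0 ≤ b := (abs_nonneg _).trans (hb ⟨0, hd⟩)
  have hδ : ∀ i, ∀ t ∈ Icc 0 T, |w i t - t| ≤ δ := fun i t ht =>
    (abs_sub_le_supTimeDev (hwmap i) ht).trans
      (Finset.le_sup' (fun i => supTimeDev T (w i)) (Finset.mem_univ i))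
  have hδ0 : 0 ≤ δ := (supTimeDev_nonneg _).trans
    (Finset.le_sup' (fun i => supTimeDev T (w i)) (Finset.mem_univ ⟨0, hd⟩))
  have hne : ∃ ζ, Feasible T Q ξ ζ :=
    feasible_nonempty_of_le hQ fun i _ hs => (hξ i).neg_mul_le (hb i) hs
  have hne_w : ∃ ζ, Feasible T Q (fun i t => ξ i (w i t)) ζ :=
    feasible_nonempty_of_le hQ fun i _ hs => (hξ i).neg_mul_le (hb i) (hwmap i hs)
  have hc : ∀ i, ∀ t ∈ Icc 0 T, regulator T Q (fun _ _ => -(b * (2 * δ))) i t ≤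
      K * (b * (2 * δ)) := fun i t ht =>
    regulator_neg_const_le hQ (by positivity) (hLip _ _ (fun _ => cadlag_const _)
      (fun _ => cadlag_const _)) ht
  have hupper : ∀ i, ∀ t ∈ Icc 0 T, regulator T Q (fun i t => ξ i (w i t)) i t ≤
      regulator T Q ξ i t + K * (b * (2 * δ)) := fun i t ht =>
    (regulator_le_add_regulator_of_delay_sub_le hQ hne hδ0
      (fun s hs j => (hξ j).delay_sub_le_comp (hb j) (hwmap j) (hδ j) hs) ht).trans
      (add_le_add_right (hc i t ht) _)
  have hlower : ∀ i, ∀ t ∈ Icc 0 T, regulator T Q ξ i t ≤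
      regulator T Q (fun i t => ξ i (w i t)) i t + K * (b * (2 * δ)) := fun i t ht =>
    (regulator_le_add_regulator_of_delay_sub_le hQ hne_w hδ0
      (fun s hs j => (hξ j).comp_delay_sub_le (hb j) (hwmap j) (hw0 j) (hδ j) hs) ht).trans
      (add_le_add_right (hc i t ht) _)
  calc _ ≤ K * (b * (2 * δ)) := supDistTuple_le (by positivity) fun i t ht =>
        abs_sub_le_iff.2 ⟨by linarith [hupper i t ht], by linarith [hlower i t ht]⟩
    _ ≤ 3 * K * b * δ := by nlinarith [mul_nonneg (mul_nonneg hK.le hb0) hδ0]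

/-- If the regulator map `ψ` is `K`-Lipschitz in the uniform metric, then
for coordinatewise time deformations `w⁽ⁱ⁾` of `[0,T]` and any `ξ ∈ ∏ D^{β_i}[0,T]`,
`max_i sup_t |ψ⁽ⁱ⁾(ξ∘w)(t) - ψ⁽ⁱ⁾(ξ)(t)| ≤ 3K‖β‖_∞‖w - e‖_∞`. -/
theorem regulator_composition_bound
    (T : ℝ) (hT : 0 < T) (d : ℕ) (hd : 0 < d) (β : Fin d → ℝ)
    (Q : Matrix (Fin d) (Fin d) ℝ) (hQ : Substochastic Q)
    (K : ℝ) (hK : 0 < K)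
    (hLip : ∀ ξ ζ : Fin d → ℝ → ℝ, (∀ i, Cadlag T (ξ i)) → (∀ i, Cadlag T (ζ i)) →
      supDistTuple T (regulator T Q ξ) (regulator T Q ζ) ≤ K * supDistTuple T ξ ζ)
    (w : Fin d → ℝ → ℝ) (hw : ∀ i, MonotoneOn (w i) (Set.Icc 0 T))
    (hwmap : ∀ i, Set.MapsTo (w i) (Set.Icc 0 T) (Set.Icc 0 T))
    (hw0 : ∀ i, w i 0 = 0) (hwT : ∀ i, w i T = T)
    (ξ : Fin d → ℝ → ℝ) (hξ : ∀ i, DBeta T (β i) (ξ i)) :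
    supDistTuple T (regulator T Q (fun i t => ξ i (w i t))) (regulator T Q ξ) ≤
      3 * K * (Finset.univ.sup' (⟨⟨0, hd⟩, Finset.mem_univ _⟩ :
          (Finset.univ : Finset (Fin d)).Nonempty) fun i => |β i|) *
        (Finset.univ.sup' (⟨⟨0, hd⟩, Finset.mem_univ _⟩ :
          (Finset.univ : Finset (Fin d)).Nonempty) fun i => supTimeDev T (w i)) :=
  regulator_composition_bound_general T d hd β Q hQ K hK hLip w hwmap hw0 ξ hξ
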